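/- arXiv:1604.01168 — 7 statements merged into one kernel-verified Lean document; each statement's English description precedes it below -/
import Mathlib

section
/- For every integer j ≥ 1 and alphabet size σ ≥ 1, the number of aperiodic strings of length j over a σ-letter alphabet satisfies μ(j,σ) ≥ σ(σ−1)^{j−1}. -/
/-- `S` (a string of length `n`) has period `d`: `d ∣ n`, `d < n`, and
`S[i] = S[i+d]` for all valid positions (0-indexed). -/
def StrPeriod {α : Type*} {n : ℕ} (S : Fin n → α) (d : ℕ) : Prop :=
  d ∣ n ∧ d < n ∧ ∀ i : ℕ, (h : i + d < n) → S ⟨i, by omega⟩ = S ⟨i + d, h⟩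

/-- A string is aperiodic if it has no period `d` with `d ∣ n`, `d < n`. -/
def AperiodicStr {α : Type*} {n : ℕ} (S : Fin n → α) : Prop :=
  ∀ d : ℕ, ¬ StrPeriod S d

/-- `strMu j σ` is the number of aperiodic strings of length `j`
over an alphabet of size `σ`. -/
noncomputable def strMu (j σ : ℕ) : ℕ :=
  Nat.card {S : Fin j → Fin σ // AperiodicStr S}

/-- For `j ≥ 1`, `μ(j,σ) ≥ σ·(σ−1)^(j−1)`. -/
theorem stmt4 (j σ : ℕ) (hj : 1 ≤ j) (hσ : 1 ≤ σ) :
    σ * (σ - 1) ^ (j - 1) ≤ strMu j σ := by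
  obtain ⟨s, rfl⟩ : ∃ s, σ = s + 1 := ⟨σ - 1, by omega⟩
  simp only [Nat.add_sub_cancel]
  have key : ∀ (a : Fin (s+1)) (f : Fin (j-1) → Fin s),
      AperiodicStr (fun i : Fin j => if h : i.val = 0 then a
        else a.succAbove (f ⟨i.val - 1, by omega⟩)) := by
    rintro a f d ⟨hd1, hd2, hd3⟩
    rcases Nat.eq_zero_or_pos d with rfl | hd
    · have := Nat.eq_zero_of_zero_dvd hd1; omega
    · have h0 : 0 + d < j := by omega
      have h1 := hd3 0 h0
      simp only at h1
      rw [dif_pos trivial, dif_neg (show ¬(0 + d = 0) by omega)] at h1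
      exact Fin.succAbove_ne a _ h1.symm
  have hle : Nat.card (Fin (s+1) × (Fin (j-1) → Fin s)) ≤ strMu j (s+1) := by
    apply Nat.card_le_card_of_injective
      (fun p : Fin (s+1) × (Fin (j-1) → Fin s) =>
        (⟨fun i : Fin j => if h : i.val = 0 then p.1
          else p.1.succAbove (p.2 ⟨i.val - 1, by omega⟩), key p.1 p.2⟩ :
          {S : Fin j → Fin (s+1) // AperiodicStr S}))
    rintro ⟨a, f⟩ ⟨a', f'⟩ h
    simp only [Subtype.mk.injEq] at h
    have ha : a = a' := by
      have := congrFun h ⟨0, by omega⟩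
      simpa using this
    subst ha
    have hf : f = f' := by
      funext k
      have hk := congrFun h ⟨k.val + 1, by omega⟩
      simp only [dif_neg (Nat.succ_ne_zero k.val), Nat.add_sub_cancel] at hk
      have := Fin.succAbove_right_injective (p := a) hk
      simpa using this
    simp [hf]
  calc (s+1) * s ^ (j-1) = Nat.card (Fin (s+1) × (Fin (j-1) → Fin s)) := by
        simp [Nat.card_eq_fintype_card]
    _ ≤ strMu j (s+1) := hle
end

section
/- Let S be a string of length n and suppose S[1,j] is periodic with period d (so d | j, d < j, and S[i] = S[i+d] for all i ≤ j−d). If additionally S[1, n−k] = S[j+1, j+n−k] for some k with j < k and j + n − k ≤ n, then S[1, j+n−k−d] = S[d+1, j+n−k], i.e., the prefix S[1, j+n−k] is shift-invariant by d. -/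
/-- If the prefix `S[1,j]` is periodic with period `d` (`d ∣ j`, `d < j`), and
`S[1, n−k] = S[j+1, j+n−k]` with `j < k ≤ n`, then the prefix `S[1, j+n−k]` is
shift-invariant by `d`: `S[1, j+n−k−d] = S[d+1, j+n−k]`. (All 0-indexed below:
`i + k + d < j + n` expresses `i ≤ j+n−k−d` in 1-indexed terms.) -/
theorem stmt8 {α : Type*} {n : ℕ} (S : Fin n → α) (j d k : ℕ)
    (hdj : d ∣ j) (hd : d < j) (hjk : j < k) (hkn : k ≤ n)
    (hper : ∀ i : ℕ, (h : i + d < j) → (hn : i + d < n) →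
      S ⟨i, by omega⟩ = S ⟨i + d, hn⟩)
    (hshift : ∀ i : ℕ, (h : i + k < n) → (hn : j + i < n) →
      S ⟨i, by omega⟩ = S ⟨j + i, hn⟩) :
    ∀ i : ℕ, (h : i + k + d < j + n) → (hn : i + d < n) →
      S ⟨i, by omega⟩ = S ⟨i + d, hn⟩ := by
  have hcongr : ∀ (a b : ℕ) (ha : a < n) (hb : b < n), a = b →
      S ⟨a, ha⟩ = S ⟨b, hb⟩ := by
    intro a b ha hb hab; subst hab; rfl
  have chain : ∀ (t a b : ℕ) (hb : b = a + t * d) (h : b < j),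
      S ⟨a, by omega⟩ = S ⟨b, by omega⟩ := by
    intro t
    induction t with
    | zero =>
      intro a b hb h
      simp only [Nat.zero_mul, Nat.add_zero] at hb
      exact hcongr _ _ _ _ hb.symm
    | succ t ih =>
      intro a b hb h
      have e : b = (a + d) + t * d := by rw [hb]; ring
      have h1 : a + d < j := by omega
      rw [hper a h1 (by omega)]
      exact ih (a + d) b e h
  intro i
  induction i using Nat.strong_induction_on with
  | _ i IH =>
    intro h hn
    by_cases h1 : i + d < j
    · exact hper i h1 hn
    · by_cases h2 : i < j
      · -- j ≤ i + d, i < j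
        set m := i + d - j with hm
        obtain ⟨c, hc⟩ := hdj
        rcases c with _ | c
        · simp only [Nat.mul_zero] at hc; omega
        · have hcd : j = d + c * d := by rw [hc]; ring
          have hc1 := chain c m i (by omega) h2
          have hs := hshift m (by omega) (by omega)
          calc S ⟨i, by omega⟩ = S ⟨m, by omega⟩ := (hc1).symm
            _ = S ⟨j + m, by omega⟩ := hs
            _ = S ⟨i + d, hn⟩ := hcongr _ _ _ _ (by omega)
      · -- j ≤ i
        have hs1 := hshift (i - j) (by omega) (by omega)
        have hs2 := hshift (i - j + d) (by omega) (by omega)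
        have hih := IH (i - j) (by omega) (by omega) (by omega)
        calc S ⟨i, by omega⟩ = S ⟨i - j, by omega⟩ := by
              rw [hs1]; exact hcongr _ _ _ _ (by omega)
          _ = S ⟨i - j + d, by omega⟩ := hih
          _ = S ⟨j + (i - j + d), by omega⟩ := hs2
          _ = S ⟨i + d, hn⟩ := hcongr _ _ _ _ (by omega)
end

section
/- Let σ ≥ 2, and for k ≥ 1 let Ω(n,k,σ) be the number of strings of length n over a σ-letter alphabet with growth exactly k. Then for all n ≥ 2k, Ω(n,k,σ) ≤ φ(k,σ) := μ(k,σ) + Σ_{j=1}^{k−1} μ(j,σ)(σ−1)σ^{k−j−1}. In particular Ω(n,k,σ) ≤ k·σ^k, a bound independent of n. -/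
/-- `S[1, n-k] = S[j+1, j+n-k]` (1-indexed): the prefix of length `n-k`
equals the length-`n-k` substring starting at position `j+1`, for a shift
`j` with `1 ≤ j ≤ k`, `j < n`. (0-indexed: `S i = S (j+i)` for `i + k < n`.) -/
def MatchShift {α : Type*} {n : ℕ} (S : Fin n → α) (j k : ℕ) : Prop :=
  1 ≤ j ∧ j < n ∧ j ≤ k ∧
    ∀ i : ℕ, (h : i + k < n) → (h2 : j + i < n) → S ⟨i, by omega⟩ = S ⟨j + i, h2⟩

/-- The growth `γ(S)`: the least `k` such that `S[1, n-k] = S[j+1, j+n-k]`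
for some shift `j` with `1 ≤ j < n`. -/
noncomputable def growth {α : Type*} {n : ℕ} (S : Fin n → α) : ℕ :=
  sInf {k | ∃ j, MatchShift S j k}

/-- `φ(k,σ) = μ(k,σ) + Σ_{j=1}^{k-1} μ(j,σ)·(σ-1)·σ^{k-j-1}`. -/
noncomputable def strPhi (k σ : ℕ) : ℕ :=
  strMu k σ + ∑ j ∈ Finset.Ico 1 k, strMu j σ * (σ - 1) * σ ^ (k - j - 1)

set_option linter.unusedVariables false

namespace Stmt10Aux

lemma Sc {α : Type*} {n : ℕ} (S : Fin n → α) {a b : ℕ} (ha : a < n) (hb : b < n)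
    (h : a = b) : S ⟨a, ha⟩ = S ⟨b, hb⟩ := by subst h; rfl

/-- Propagation formula: values repeat with period `j` on the first `n-k+j` positions. -/
lemma formula {α : Type*} {n k j : ℕ} (S : Fin n → α) (hj1 : 1 ≤ j)
    (hstep : ∀ i : ℕ, (h : i + k < n) → (h2 : j + i < n) → S ⟨i, by omega⟩ = S ⟨j + i, h2⟩) :
    ∀ m : ℕ, (h : m < n) → (h' : m % j < n) → m < n - k + j → S ⟨m, h⟩ = S ⟨m % j, h'⟩ := by
  intro m
  induction m using Nat.strong_induction_on with
  | _ m ih =>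
    intro h h' hm
    by_cases hmj : m < j
    · exact Sc S _ _ (Nat.mod_eq_of_lt hmj).symm
    · push_neg at hmj
      have h1 : (m - j) + k < n := by omega
      have h2 : j + (m - j) < n := by omega
      have e1 : S ⟨m - j, by omega⟩ = S ⟨j + (m - j), h2⟩ := hstep (m - j) h1 h2
      have e3 : (m - j) % j = m % j := by
        conv_rhs => rw [show m = (m - j) + j by omega]
        rw [Nat.add_mod_right]
      have := ih (m - j) (by omega) (by omega) (e3 ▸ h') (by omega)
      calc S ⟨m, h⟩ = S ⟨j + (m - j), h2⟩ := Sc S _ _ (by omega)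
        _ = S ⟨m - j, by omega⟩ := e1.symm
        _ = S ⟨(m - j) % j, e3 ▸ h'⟩ := this
        _ = S ⟨m % j, h'⟩ := Sc S _ _ e3

def punch {σ : ℕ} (a b : Fin σ) (hne : b ≠ a) : Fin (σ - 1) :=
  if h : b.val < a.val then ⟨b.val, by omega⟩
  else ⟨b.val - 1, by
    have hb := b.isLt
    have hv : a.val ≠ b.val := fun e => hne (Fin.ext e.symm)
    omega⟩

lemma punch_inj {σ : ℕ} {a a' b b' : Fin σ} (ha : a = a') (hb : b ≠ a) (hb' : b' ≠ a')
    (he : punch a b hb = punch a' b' hb') : b = b' := by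
  subst ha
  have h1 : b.val ≠ a.val := fun e => hb (Fin.ext e)
  have h2 : b'.val ≠ a.val := fun e => hb' (Fin.ext e)
  have hv := congrArg Fin.val he
  unfold punch at hv
  apply Fin.ext
  split_ifs at hv <;> simp at hv <;> omega


/-- From `growth S = k` extract the minimal shift. -/
lemma exists_minshift {α : Type*} {n k : ℕ} (S : Fin n → α) (hg : growth S = k)
    (hk : 1 ≤ k) :
    ∃ j, 1 ≤ j ∧ j ≤ k ∧ MatchShift S j k ∧ ∀ j' < j, ¬ MatchShift S j' k := by
  have hne : {k' | ∃ j, MatchShift S j k'}.Nonempty := by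
    by_contra h
    rw [Set.not_nonempty_iff_eq_empty] at h
    rw [growth, h, Nat.sInf_empty] at hg
    omega
  have hkmem : k ∈ {k' | ∃ j, MatchShift S j k'} := hg ▸ Nat.sInf_mem hne
  obtain ⟨j0, hj0⟩ := hkmem
  have hJne : {j | MatchShift S j k}.Nonempty := ⟨j0, hj0⟩
  set j := sInf {j | MatchShift S j k} with hjdef
  have hjmem : MatchShift S j k := Nat.sInf_mem hJne
  refine ⟨j, hjmem.1, hjmem.2.2.1, hjmem, fun j' hj' => Nat.notMem_of_lt_sInf hj'⟩

/-- The minimal-shift prefix is aperiodic. -/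
lemma prefix_aperiodic {α : Type*} {n k j : ℕ} (S : Fin n → α)
    (hn : 2 * k ≤ n) (hms : MatchShift S j k)
    (hmin : ∀ j' < j, ¬ MatchShift S j' k) :
    AperiodicStr (fun t : Fin j => S ⟨t.val, by
      have := t.isLt; have := hms.2.1; omega⟩) := by
  obtain ⟨hj1, hjn, hjk, hstep⟩ := hms
  rintro d ⟨hdvd, hdlt, hper⟩
  have hd1 : 1 ≤ d := by
    rcases Nat.eq_zero_or_pos d with h | h
    · subst h; obtain ⟨c, hc⟩ := hdvd; omega
    · exact h
  set w : Fin j → α := fun t : Fin j => S ⟨t.val, by have := t.isLt; omega⟩ with hw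
  -- period propagation inside w : w m = w (m % d) for m < j
  have wstep : ∀ i : ℕ, (h : i + d < j) → (h2 : d + i < j) →
      w ⟨i, by omega⟩ = w ⟨d + i, h2⟩ := by
    intro i h h2
    have := hper i h
    calc w ⟨i, by omega⟩ = w ⟨i, by omega⟩ := rfl
      _ = w ⟨i + d, h⟩ := this
      _ = w ⟨d + i, h2⟩ := Sc w _ _ (by omega)
  have wmod : ∀ m : ℕ, (h : m < j) → (h' : m % d < j) → w ⟨m, h⟩ = w ⟨m % d, h'⟩ := by
    intro m h h'
    exact formula (k := d) w hd1 wstep m h h' (by omega)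
  -- build MatchShift S d k
  apply hmin d (by omega)
  refine ⟨hd1, by omega, by omega, ?_⟩
  intro i h h2
  have hij : i % j < j := Nat.mod_lt _ (by omega)
  have hdij : (d + i) % j < j := Nat.mod_lt _ (by omega)
  have e1 : S ⟨i, by omega⟩ = S ⟨i % j, by omega⟩ :=
    formula S hj1 hstep i (by omega) (by omega) (by omega)
  have e2 : S ⟨d + i, h2⟩ = S ⟨(d + i) % j, by omega⟩ :=
    formula S hj1 hstep (d + i) h2 (by omega) (by omega)
  have m1 : (i % j) % d = i % d := Nat.mod_mod_of_dvd i hdvd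
  have m2 : ((d + i) % j) % d = i % d := by
    rw [Nat.mod_mod_of_dvd _ hdvd, Nat.add_mod_left]
  have hb1 : (i % j) % d < j := by
    have := Nat.mod_lt (i % j) (show 0 < d by omega); omega
  have hb2 : ((d + i) % j) % d < j := by
    have := Nat.mod_lt ((d + i) % j) (show 0 < d by omega); omega
  have f1 : w ⟨i % j, hij⟩ = w ⟨(i % j) % d, hb1⟩ :=
    wmod (i % j) hij hb1
  have f2 : w ⟨(d + i) % j, hdij⟩ = w ⟨((d + i) % j) % d, hb2⟩ :=
    wmod ((d + i) % j) hdij hb2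
  have f3 : w ⟨(i % j) % d, hb1⟩ = w ⟨((d + i) % j) % d, hb2⟩ :=
    Sc w _ _ (by omega)
  have key : w ⟨i % j, hij⟩ = w ⟨(d + i) % j, hdij⟩ := by rw [f1, f3, ← f2]
  have key' : S ⟨i % j, by omega⟩ = S ⟨(d + i) % j, by omega⟩ := key
  rw [e1, e2]; exact key'

/-- If the minimal shift `j < k`, the character at position `n-k+j` differs
from the one at `n-k`. -/
lemma mismatch {α : Type*} {n k j : ℕ} (S : Fin n → α) (hg : growth S = k)
    (hk : 1 ≤ k) (hn : 2 * k ≤ n) (hms : MatchShift S j k) (hjk : j < k) :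
    S ⟨n - k, by have := hms.2.1; omega⟩ ≠ S ⟨n - k + j, by have := hms.2.1; omega⟩ := by
  obtain ⟨hj1, hjn, _, hstep⟩ := hms
  intro heq
  have hnot : k - 1 ∉ {k' | ∃ j, MatchShift S j k'} :=
    Nat.notMem_of_lt_sInf (by rw [← growth, hg]; omega)
  apply hnot
  refine ⟨j, hj1, hjn, by omega, ?_⟩
  intro i h h2
  by_cases hik : i + k < n
  · exact hstep i hik h2
  · have hieq : i = n - k := by omega
    calc S ⟨i, by omega⟩ = S ⟨n - k, by omega⟩ := Sc S _ _ hieq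
      _ = S ⟨n - k + j, by omega⟩ := heq
      _ = S ⟨j + i, h2⟩ := Sc S _ _ (by omega)



lemma fiber_bound_lt (σ k n j : ℕ) (hσ : 2 ≤ σ) (hk : 1 ≤ k) (hn : 2 * k ≤ n)
    (hj1 : 1 ≤ j) (hjk : j < k) :
    Nat.card {S : Fin n → Fin σ //
        growth S = k ∧ MatchShift S j k ∧ ∀ j' < j, ¬ MatchShift S j' k}
      ≤ strMu j σ * ((σ - 1) * σ ^ (k - j - 1)) := by
  have hjn : j < n := by omega
  have step := fun (S : {S : Fin n → Fin σ //
      growth S = k ∧ MatchShift S j k ∧ ∀ j' < j, ¬ MatchShift S j' k}) => S.2.2.1.2.2.2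
  have hF : Function.Injective (fun (S : {S : Fin n → Fin σ //
      growth S = k ∧ MatchShift S j k ∧ ∀ j' < j, ¬ MatchShift S j' k}) =>
      ((⟨fun t : Fin j => S.1 ⟨t.val, by have := t.isLt; omega⟩,
        prefix_aperiodic S.1 hn S.2.2.1 S.2.2.2⟩ :
          {w : Fin j → Fin σ // AperiodicStr w}),
       punch (S.1 ⟨n - k, by omega⟩) (S.1 ⟨n - k + j, by omega⟩)
         (Ne.symm (mismatch S.1 S.2.1 hk hn S.2.2.1 hjk)),
       fun t : Fin (k - j - 1) => S.1 ⟨n - k + j + 1 + t.val, by have := t.isLt; omega⟩)) := by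
    intro S1 S2 hFeq
    have hw : (fun t : Fin j => S1.1 ⟨t.val, by have := t.isLt; omega⟩)
        = (fun t : Fin j => S2.1 ⟨t.val, by have := t.isLt; omega⟩) :=
      congrArg (fun x => x.1.1) hFeq
    have hp := congrArg (fun x => x.2.1) hFeq
    have ht := congrArg (fun x => x.2.2) hFeq
    simp only at hw hp ht
    have hpre : ∀ m : ℕ, (h : m < n) → m < n - k + j → S1.1 ⟨m, h⟩ = S2.1 ⟨m, h⟩ := by
      intro m h hm
      have hmj : m % j < n := by
        have := Nat.mod_lt m (show 0 < j by omega); omega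
      rw [formula S1.1 hj1 (step S1) m h hmj hm,
          formula S2.1 hj1 (step S2) m h hmj hm]
      exact congrFun hw ⟨m % j, Nat.mod_lt m (by omega)⟩
    apply Subtype.ext
    funext m
    rcases lt_trichotomy m.val (n - k + j) with hc | hc | hc
    · exact hpre m.1 m.2 hc
    · have hb := punch_inj (hpre (n - k) (by omega) (by omega)) _ _ hp
      calc S1.1 m = S1.1 ⟨n - k + j, by omega⟩ := Sc S1.1 m.2 (by omega) hc
        _ = S2.1 ⟨n - k + j, by omega⟩ := hb
        _ = S2.1 m := Sc S2.1 (by omega) m.2 hc.symm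
    · have hm2 := m.isLt
      have htt := congrFun ht ⟨m.1 - (n - k + j + 1), by omega⟩
      calc S1.1 m = S1.1 ⟨n - k + j + 1 + (m.1 - (n - k + j + 1)), by omega⟩ :=
            Sc S1.1 m.2 (by omega) (by omega)
        _ = S2.1 ⟨n - k + j + 1 + (m.1 - (n - k + j + 1)), by omega⟩ := htt
        _ = S2.1 m := Sc S2.1 (by omega) m.2 (by omega)
  have hle := Nat.card_le_card_of_injective _ hF
  refine hle.trans (le_of_eq ?_)
  rw [Nat.card_prod, Nat.card_prod]
  have c1 : Nat.card (Fin (σ - 1)) = σ - 1 := by simp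
  have c2 : Nat.card (Fin (k - j - 1) → Fin σ) = σ ^ (k - j - 1) := by
    rw [Nat.card_eq_fintype_card]
    simp [Fintype.card_fun]
  rw [c1, c2]
  rfl

lemma fiber_bound_eq (σ k n : ℕ) (hσ : 2 ≤ σ) (hk : 1 ≤ k) (hn : 2 * k ≤ n) :
    Nat.card {S : Fin n → Fin σ //
        growth S = k ∧ MatchShift S k k ∧ ∀ j' < k, ¬ MatchShift S j' k}
      ≤ strMu k σ := by
  have step := fun (S : {S : Fin n → Fin σ //
      growth S = k ∧ MatchShift S k k ∧ ∀ j' < k, ¬ MatchShift S j' k}) => S.2.2.1.2.2.2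
  have hF : Function.Injective (fun (S : {S : Fin n → Fin σ //
      growth S = k ∧ MatchShift S k k ∧ ∀ j' < k, ¬ MatchShift S j' k}) =>
      (⟨fun t : Fin k => S.1 ⟨t.val, by have := t.isLt; omega⟩,
        prefix_aperiodic S.1 hn S.2.2.1 S.2.2.2⟩ :
          {w : Fin k → Fin σ // AperiodicStr w})) := by
    intro S1 S2 hFeq
    have hw : (fun t : Fin k => S1.1 ⟨t.val, by have := t.isLt; omega⟩)
        = (fun t : Fin k => S2.1 ⟨t.val, by have := t.isLt; omega⟩) :=
      congrArg (fun x => x.1) hFeq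
    apply Subtype.ext
    funext m
    have hm : m.val < n - k + k := by have := m.isLt; omega
    have hmj : m.val % k < n := by
      have := Nat.mod_lt m.val (show 0 < k by omega); omega
    have e1 := formula S1.1 hk (step S1) m.val m.2 hmj hm
    have e2 := formula S2.1 hk (step S2) m.val m.2 hmj hm
    calc S1.1 m = S1.1 ⟨m.val % k, hmj⟩ := e1
      _ = S2.1 ⟨m.val % k, hmj⟩ := congrFun hw ⟨m.val % k, Nat.mod_lt m.val (by omega)⟩
      _ = S2.1 m := e2.symm
  exact Nat.card_le_card_of_injective _ hF

end Stmt10Aux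

open Stmt10Aux


/-- For `n ≥ 2k`, the number `Ω(n,k,σ)` of strings of length `n` with growth
exactly `k` is at most `φ(k,σ)`, and in particular at most `k·σ^k`. -/
theorem stmt10 (σ k n : ℕ) (hσ : 2 ≤ σ) (hk : 1 ≤ k) (hn : 2 * k ≤ n) :
    Nat.card {S : Fin n → Fin σ // growth S = k} ≤ strPhi k σ ∧
    Nat.card {S : Fin n → Fin σ // growth S = k} ≤ k * σ ^ k := by
  classical
  have main : Nat.card {S : Fin n → Fin σ // growth S = k} ≤ strPhi k σ := by
    set P : ℕ → (Fin n → Fin σ) → Prop := fun j S =>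
      growth S = k ∧ MatchShift S j k ∧ ∀ j' < j, ¬ MatchShift S j' k with hP
    have h1 : Nat.card {S : Fin n → Fin σ // growth S = k}
        = (Finset.univ.filter (fun S : Fin n → Fin σ => growth S = k)).card := by
      rw [Nat.card_eq_fintype_card, Fintype.card_subtype]
    have hsub : Finset.univ.filter (fun S : Fin n → Fin σ => growth S = k)
        ⊆ (Finset.Ico 1 (k+1)).biUnion (fun j => Finset.univ.filter (P j)) := by
      intro S hS
      rw [Finset.mem_filter] at hS
      obtain ⟨j, hj1, hjk, hms, hmin⟩ := exists_minshift S hS.2 hk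
      rw [Finset.mem_biUnion]
      exact ⟨j, Finset.mem_Ico.mpr (by omega),
        Finset.mem_filter.mpr ⟨Finset.mem_univ _, hS.2, hms, hmin⟩⟩
    have h2 : ∀ j : ℕ, (Finset.univ.filter (P j)).card = Nat.card {S : Fin n → Fin σ // P j S} := by
      intro j
      rw [Nat.card_eq_fintype_card, Fintype.card_subtype]
    calc Nat.card {S : Fin n → Fin σ // growth S = k}
        = (Finset.univ.filter (fun S : Fin n → Fin σ => growth S = k)).card := h1
      _ ≤ ((Finset.Ico 1 (k+1)).biUnion (fun j => Finset.univ.filter (P j))).card :=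
          Finset.card_le_card hsub
      _ ≤ ∑ j ∈ Finset.Ico 1 (k+1), (Finset.univ.filter (P j)).card :=
          Finset.card_biUnion_le
      _ = ∑ j ∈ Finset.Ico 1 k, (Finset.univ.filter (P j)).card
          + (Finset.univ.filter (P k)).card := Finset.sum_Ico_succ_top (by omega) _
      _ ≤ ∑ j ∈ Finset.Ico 1 k, strMu j σ * ((σ - 1) * σ ^ (k - j - 1)) + strMu k σ := by
          apply Nat.add_le_add
          · apply Finset.sum_le_sum
            intro j hj
            rw [Finset.mem_Ico] at hj
            rw [h2 j]
            exact fiber_bound_lt σ k n j hσ hk hn hj.1 hj.2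
          · rw [h2 k]
            exact fiber_bound_eq σ k n hσ hk hn
      _ = strPhi k σ := by
          rw [strPhi, add_comm]
          congr 1
          apply Finset.sum_congr rfl
          intro j _
          rw [mul_assoc]
  have hmu : ∀ j : ℕ, strMu j σ ≤ σ ^ j := by
    intro j
    calc strMu j σ ≤ Nat.card (Fin j → Fin σ) := Finite.card_subtype_le _
      _ = σ ^ j := by rw [Nat.card_eq_fintype_card]; simp [Fintype.card_fun]
  have phile : strPhi k σ ≤ k * σ ^ k := by
    have hterm : ∀ j ∈ Finset.Ico 1 k, strMu j σ * (σ - 1) * σ ^ (k - j - 1) ≤ σ ^ k := by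
      intro j hj
      rw [Finset.mem_Ico] at hj
      calc strMu j σ * (σ - 1) * σ ^ (k - j - 1) ≤ σ ^ j * σ * σ ^ (k - j - 1) :=
            Nat.mul_le_mul (Nat.mul_le_mul (hmu j) (by omega)) le_rfl
        _ = σ ^ (j + 1 + (k - j - 1)) := by rw [pow_add, pow_add, pow_one]
        _ = σ ^ k := by congr 1; omega
    calc strPhi k σ ≤ σ ^ k + ∑ j ∈ Finset.Ico 1 k, σ ^ k :=
          Nat.add_le_add (hmu k) (Finset.sum_le_sum hterm)
      _ = σ ^ k + (k - 1) * σ ^ k := by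
          rw [Finset.sum_const, Nat.card_Ico, smul_eq_mul]
      _ = (k - 1 + 1) * σ ^ k := by ring
      _ = k * σ ^ k := by congr 1; omega
  exact ⟨main, main.trans phile⟩
end

section
/- Let σ ≥ 2 and let S be a string of length n with growth γ(S) = k, where growth is the least k' such that some j with 1 ≤ j < n satisfies S[1, n−k'] = S[j+1, j+n−k']. If the minimizing shift is j = k (i.e., S[1, n−k] = S[k+1, n]), then the prefix S[1,k] is aperiodic. -/
/-- If `γ(S) = k` and the minimizing shift is `j = k`
(i.e. `S[1, n−k] = S[k+1, n]`), then the prefix `S[1,k]` is aperiodic. -/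
theorem stmt11 (σ n k : ℕ) (hσ : 2 ≤ σ) (S : Fin n → Fin σ) (hkn : k < n)
    (hg : growth S = k) (hm : MatchShift S k k) :
    AperiodicStr (fun i : Fin k => S (Fin.castLE hkn.le i)) := by
  intro d hper
  obtain ⟨hd, hdk, hp⟩ := hper
  have hk1 : 1 ≤ k := hm.1
  have hd1 : 1 ≤ d := by
    rcases Nat.eq_zero_or_pos d with h | h
    · subst h; rw [Nat.zero_dvd] at hd; omega
    · exact h
  obtain ⟨m, hmd⟩ := hd
  obtain ⟨m', rfl⟩ : ∃ m', m = m' + 1 := by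
    refine ⟨m - 1, ?_⟩; rcases m with _ | m <;> omega
  have hc : m' * d + d = k := by rw [hmd]; ring
  have hmatch := hm.2.2.2
  have E : ∀ (a b : ℕ) (ha : a < n) (hb : b < n), a = b → S ⟨a, ha⟩ = S ⟨b, hb⟩ := by
    intro a b ha hb h; subst h; rfl
  -- iterated periodicity within the prefix
  have A : ∀ t j, (h : j + t * d < k) → S ⟨j, by omega⟩ = S ⟨j + t * d, by omega⟩ := by
    intro t
    induction t with
    | zero =>
      intro j h
      exact E _ _ _ _ (by omega)
    | succ t ih =>
      intro j h
      have ht : (t + 1) * d = t * d + d := by ring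
      have h1 : j + t * d < k := by omega
      have h2 : j + t * d + d < k := by omega
      calc S ⟨j, by omega⟩ = S ⟨j + t * d, by omega⟩ := ih j h1
        _ = S ⟨j + t * d + d, by omega⟩ := hp (j + t * d) h2
        _ = S ⟨j + (t + 1) * d, by omega⟩ := E _ _ _ _ (by omega)
  have key : ∀ i, (h : i + d < n) → S ⟨i, by omega⟩ = S ⟨i + d, h⟩ := by
    intro i
    induction i using Nat.strong_induction_on with
    | _ i ih =>
      intro h
      by_cases hc1 : i + d < k
      · exact hp i hc1
      · by_cases hc2 : i < k
        · -- k ≤ i + d, i < k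
          have e1 : S ⟨i + d - k, by omega⟩ = S ⟨i + d, h⟩ := by
            have := hmatch (i + d - k) (by omega) (by omega)
            calc S ⟨i + d - k, by omega⟩ = S ⟨k + (i + d - k), by omega⟩ := this
              _ = S ⟨i + d, h⟩ := E _ _ _ _ (by omega)
          have e2 : S ⟨i + d - k, by omega⟩ = S ⟨i, by omega⟩ := by
            have hA := A m' (i + d - k) (by omega)
            calc S ⟨i + d - k, by omega⟩ = S ⟨i + d - k + m' * d, by omega⟩ := hA
              _ = S ⟨i, by omega⟩ := E _ _ _ _ (by omega)
          exact e2.symm.trans e1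
        · -- k ≤ i
          have e1 : S ⟨i - k, by omega⟩ = S ⟨i, by omega⟩ := by
            have := hmatch (i - k) (by omega) (by omega)
            calc S ⟨i - k, by omega⟩ = S ⟨k + (i - k), by omega⟩ := this
              _ = S ⟨i, by omega⟩ := E _ _ _ _ (by omega)
          have e2 : S ⟨i - k + d, by omega⟩ = S ⟨i + d, h⟩ := by
            have := hmatch (i - k + d) (by omega) (by omega)
            calc S ⟨i - k + d, by omega⟩ = S ⟨k + (i - k + d), by omega⟩ := this
              _ = S ⟨i + d, h⟩ := E _ _ _ _ (by omega)
          have e3 : S ⟨i - k, by omega⟩ = S ⟨i - k + d, by omega⟩ :=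
            ih (i - k) (by omega) (by omega)
          exact e1.symm.trans (e3.trans e2)
  have hms : MatchShift S d d := by
    refine ⟨hd1, by omega, le_refl d, fun i h h2 => ?_⟩
    calc S ⟨i, by omega⟩ = S ⟨i + d, by omega⟩ := key i (by omega)
      _ = S ⟨d + i, h2⟩ := E _ _ _ _ (by omega)
  have hle : growth S ≤ d := Nat.sInf_le ⟨d, hms⟩
  rw [hg] at hle
  omega
end

section
/- Let σ ≥ 2 and let S be a uniformly random string of length n over a σ-letter alphabet. Define growth γ(S) as the least k such that some j with 1 ≤ j < n satisfies S[1, n−k] = S[j+1, j+n−k]. Then there exist c > 0 and n₀ such that for all n > n₀, E[γ(S)] ≥ c·n. -/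
/-!
A string with a match of shift `j` at growth `k` is `j`-periodic on its first `n - k + j`
letters, so it is determined by its first `j` and its last `k - j` letters: there are at most
`σ ^ k` of them. Summing over the shifts `j ≤ m`, at most `m σ ^ m` strings have growth `≤ m`,
which for `m = ⌊n/2⌋` is at most half of all `σ ^ n` strings. The rest have growth
`> n/2`, so the expected growth is at least `n/4`.
-/

open Finset

namespace MatchShift

variable {α : Type*} {n j k : ℕ} {S T : Fin n → α}

lemma mono (h : MatchShift S j k) {k' : ℕ} (hk : k ≤ k') : MatchShift S j k' :=
  ⟨h.1, h.2.1, h.2.2.1.trans hk, fun i hi hji => h.2.2.2 i (by omega) hji⟩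

lemma eq_of_agree_on_prefix_suffix (hS : MatchShift S j k) (hT : MatchShift T j k)
    (hpre : ∀ p (hp : p < n), p < j → S ⟨p, hp⟩ = T ⟨p, hp⟩)
    (hsuf : ∀ p (hp : p < n), n + j ≤ p + k → S ⟨p, hp⟩ = T ⟨p, hp⟩) : S = T := by
  funext ⟨p, hp⟩
  induction p using Nat.strong_induction_on with
  | _ p ih =>
    by_cases hpj : p < j
    · exact hpre p hp hpj
    by_cases hpk : n + j ≤ p + k
    · exact hsuf p hp hpk
    obtain ⟨i, rfl⟩ : ∃ i, p = j + i := ⟨p - j, by omega⟩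
    have hj := hS.1
    rw [← hS.2.2.2 i (by omega) hp, ← hT.2.2.2 i (by omega) hp]
    exact ih i (by omega) (by omega)

end MatchShift

lemma exists_matchShift_growth {α : Type*} {n : ℕ} (hn : 2 ≤ n) (S : Fin n → α) :
    ∃ j, MatchShift S j (growth S) :=
  Nat.sInf_mem (s := {k | ∃ j, MatchShift S j k})
    ⟨n, 1, le_rfl, by omega, by omega, fun i hi => by omega⟩

lemma two_mul_le_two_pow (m : ℕ) : 2 * m ≤ 2 ^ m := by
  cases m with
  | zero => simp
  | succ k => have := Nat.lt_two_pow_self (n := k); rw [pow_succ]; omega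

section Counting

open scoped Classical

variable {α : Type*} [Fintype α] {n : ℕ}

lemma card_filter_matchShift_le (j k : ℕ) :
    #{S : Fin n → α | MatchShift S j k} ≤ Fintype.card α ^ k := by
  rcases eq_empty_or_nonempty {S : Fin n → α | MatchShift S j k} with hempty | ⟨S₀, hS₀⟩
  · simp [hempty]
  obtain ⟨-, hjn, hjk, -⟩ := (mem_filter.mp hS₀).2
  let code (S : Fin n → α) : (Fin j → α) × (Fin (k - j) → α) :=
    (fun a => S ⟨a, by omega⟩, fun a => S ⟨n - 1 - a, by omega⟩)
  have hcode : Set.InjOn code ({S : Fin n → α | MatchShift S j k} : Finset _) := by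
    intro S hS T hT hST
    simp only [coe_filter, mem_univ, true_and, Set.mem_ofPred_eq] at hS hT
    refine hS.eq_of_agree_on_prefix_suffix hT
      (fun p hp hpj => congrFun (congrArg Prod.fst hST) ⟨p, hpj⟩) fun p hp hpk => ?_
    have h := congrFun (congrArg Prod.snd hST) ⟨n - 1 - p, by omega⟩
    simpa [code, show n - 1 - (n - 1 - p) = p by omega] using h
  calc #{S : Fin n → α | MatchShift S j k}
      ≤ #(univ : Finset ((Fin j → α) × (Fin (k - j) → α))) :=
        card_le_card_of_injOn code (fun _ _ => mem_univ _) hcode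
    _ = Fintype.card α ^ k := by
        simp [← pow_add, Nat.add_sub_cancel' hjk]

lemma card_filter_growth_le (hn : 2 ≤ n) (m : ℕ) :
    #{S : Fin n → α | growth S ≤ m} ≤ m * Fintype.card α ^ m := by
  have hsub : ({S : Fin n → α | growth S ≤ m} : Finset _) ⊆
      (Icc 1 m).biUnion fun j => {S : Fin n → α | MatchShift S j m} := by
    intro S hS
    obtain ⟨j, hj⟩ := exists_matchShift_growth hn S
    have hm := (mem_filter.mp hS).2
    simp only [mem_biUnion, mem_Icc, mem_filter, mem_univ, true_and]
    exact ⟨j, ⟨hj.1, hj.2.2.1.trans hm⟩, hj.mono hm⟩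
  calc #{S : Fin n → α | growth S ≤ m}
      ≤ ∑ j ∈ Icc 1 m, #{S : Fin n → α | MatchShift S j m} :=
        (card_le_card hsub).trans card_biUnion_le
    _ ≤ ∑ _j ∈ Icc 1 m, Fintype.card α ^ m :=
        sum_le_sum fun j _ => card_filter_matchShift_le j m
    _ = m * Fintype.card α ^ m := by simp

lemma two_mul_card_filter_growth_le (hα : 2 ≤ Fintype.card α) (hn : 2 ≤ n) :
    2 * #{S : Fin n → α | growth S ≤ n / 2} ≤ Fintype.card α ^ n := by
  set σ := Fintype.card α
  set m := n / 2
  have hm : 2 * m ≤ σ ^ (n - m) :=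
    calc 2 * m ≤ 2 ^ m := two_mul_le_two_pow m
      _ ≤ 2 ^ (n - m) := Nat.pow_le_pow_right two_pos (by omega)
      _ ≤ σ ^ (n - m) := Nat.pow_le_pow_left hα _
  calc 2 * #{S : Fin n → α | growth S ≤ m} ≤ 2 * m * σ ^ m := by
        rw [mul_assoc]; exact Nat.mul_le_mul_left 2 (card_filter_growth_le hn m)
    _ ≤ σ ^ (n - m) * σ ^ m := Nat.mul_le_mul_right _ hm
    _ = σ ^ n := by rw [← pow_add, Nat.sub_add_cancel (Nat.div_le_self n 2)]

lemma mul_card_le_four_mul_sum_growth (hα : 2 ≤ Fintype.card α) (hn : 2 ≤ n) :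
    n * Fintype.card α ^ n ≤ 4 * ∑ S : Fin n → α, growth S := by
  have hbad := two_mul_card_filter_growth_le hα hn
  set m := n / 2
  set good := ({S : Fin n → α | ¬ growth S ≤ m} : Finset _)
  have hsplit : #{S : Fin n → α | growth S ≤ m} + #good = Fintype.card α ^ n := by
    rw [card_filter_add_card_filter_not, card_univ, Fintype.card_fun, Fintype.card_fin]
  have hgood : #good * (m + 1) ≤ ∑ S : Fin n → α, growth S :=
    calc #good * (m + 1) = #good • (m + 1) := rfl
      _ ≤ ∑ S ∈ good, growth S :=
        card_nsmul_le_sum _ _ _ fun S hS => by have := (mem_filter.mp hS).2; omega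
      _ ≤ ∑ S : Fin n → α, growth S := sum_le_sum_of_subset (filter_subset _ _)
  have hn2 : n ≤ 2 * (m + 1) := by omega
  calc n * Fintype.card α ^ n ≤ 2 * (m + 1) * (2 * #good) :=
        Nat.mul_le_mul hn2 (by omega)
    _ = 4 * (#good * (m + 1)) := by ring
    _ ≤ 4 * ∑ S : Fin n → α, growth S := Nat.mul_le_mul_left 4 hgood

end Counting

/-- The expected growth of a uniformly random string of length `n` over a
`σ`-letter alphabet is at least `c·n` for some `c > 0` and all large `n`. -/
theorem stmt15 (σ : ℕ) (hσ : 2 ≤ σ) :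
    ∃ c : ℝ, 0 < c ∧ ∃ n₀ : ℕ, ∀ n : ℕ, n₀ < n →
      (∑ S : Fin n → Fin σ, (growth S : ℝ)) / (σ : ℝ) ^ n ≥ c * n := by
  refine ⟨1 / 4, by norm_num, 1, fun n hn => ?_⟩
  have h : n * σ ^ n ≤ 4 * ∑ S : Fin n → Fin σ, growth S := by
    simpa using mul_card_le_four_mul_sum_growth (α := Fin σ) (by simpa using hσ) hn
  have hpos : (0 : ℝ) < (σ : ℝ) ^ n := by positivity
  rw [ge_iff_le, le_div_iff₀ hpos]
  have h' : (n : ℝ) * (σ : ℝ) ^ n ≤ 4 * ∑ S : Fin n → Fin σ, (growth S : ℝ) := by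
    exact_mod_cast h
  linarith
end

section
/- Let σ ≥ 2 and let S be a uniformly random string of length n over a σ-letter alphabet. The number of nodes of the (non-compact) suffix tree of S is at least 2 + n + Σ_{m=1}^{n} γ(S[n−m+1, n]), where γ denotes the growth of a string; consequently, there exist d > 0 and n₀ such that for n > n₀ the expected number of nodes of the suffix tree of S is at least d·n². -/
/-- The number of nodes of the (non-compact) suffix tree of `S`: nodes are the
distinct prefixes (including the empty one, the root) of the `n` words
`S[j,n]$`, where the terminal symbol `$` is modelled by `none`. -/
noncomputable def suffixTreeNodes {σ n : ℕ} (S : Fin n → Fin σ) : ℕ :=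
  Nat.card {L : List (Option (Fin σ)) //
    ∃ j < n, L <+: ((List.ofFn S).drop j).map some ++ [none]}

namespace STAux

lemma growth_eq_zero_of_one {α : Type*} {m : ℕ} (hm : m = 1) (f : Fin m → α) :
    growth f = 0 := by
  subst hm
  unfold growth
  convert Nat.sInf_empty
  ext k
  simp only [Set.mem_setOf_eq, Set.mem_empty_iff_false, iff_false]
  rintro ⟨j, h1, h2, -⟩; omega

lemma growth_le_self {α : Type*} {m : ℕ} (hm : 2 ≤ m) (f : Fin m → α) :
    growth f ≤ m := by
  apply Nat.sInf_le
  exact ⟨1, le_refl 1, by omega, by omega, fun i h h2 => absurd h (by omega)⟩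

variable {σ n : ℕ} (S : Fin n → Fin σ)

def sfx (m : ℕ) (hm : m ≤ n) : Fin m → Fin σ :=
  fun i => S ⟨n - m + i.1, by have := i.isLt; omega⟩

def target (j : ℕ) : List (Option (Fin σ)) :=
  ((List.ofFn S).drop j).map some ++ [none]

def pref (m ℓ : ℕ) : List (Option (Fin σ)) :=
  (((List.ofFn S).drop (n - m)).map some).take ℓ

lemma target_length (j : ℕ) : (target S j).length = (n - j) + 1 := by
  simp [target]

lemma none_mem_target (j : ℕ) : none ∈ target S j := by
  simp [target]

lemma pref_length {m ℓ : ℕ} (hm : m ≤ n) (hl : ℓ ≤ m) : (pref S m ℓ).length = ℓ := by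
  simp [pref]; omega

lemma none_not_mem_pref (m ℓ : ℕ) : none ∉ pref S m ℓ := by
  intro h
  have h2 := List.mem_of_mem_take h
  have h3 := List.mem_of_mem_drop (by simpa using h2)
  rw [List.mem_ofFn] at h3
  obtain ⟨y, hy⟩ := h3
  simp [Function.comp] at hy

lemma pref_getElem {m ℓ : ℕ} (hm : m ≤ n) (hl : ℓ ≤ m)
    (i : ℕ) (hi : i < ℓ) (hb : i < (pref S m ℓ).length) :
    (pref S m ℓ)[i] = some (S ⟨n - m + i, by omega⟩) := by
  simp only [pref, List.getElem_take, List.getElem_map, List.getElem_drop, List.getElem_ofFn]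

lemma pref_prefix_target (m ℓ : ℕ) : pref S m ℓ <+: target S (n - m) :=
  (List.take_prefix _ _).trans (List.prefix_append _ _)

lemma growth_le_of_pref_eq {m m' ℓ : ℕ} (hm : m ≤ n) (hm'1 : 1 ≤ m')
    (hlt : m' < m) (hl1 : 1 ≤ ℓ) (hlm' : ℓ ≤ m')
    (heq : pref S m ℓ = pref S m' ℓ) : growth (sfx S m hm) ≤ m - ℓ := by
  apply Nat.sInf_le
  refine ⟨m - m', by omega, by omega, by omega, fun i h h2 => ?_⟩
  -- i + (m - ℓ) < m, so i < ℓ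
  have hi : i < ℓ := by omega
  have hb1 : i < (pref S m ℓ).length := by rw [pref_length S hm (by omega)]; exact hi
  have hb2 : i < (pref S m' ℓ).length := by rw [pref_length S (by omega) hlm']; exact hi
  have hge : (pref S m ℓ)[i] = (pref S m' ℓ)[i] := by
    congr 1
  rw [pref_getElem S hm (by omega) i hi hb1, pref_getElem S (by omega) hlm' i hi hb2] at hge
  have hval : S ⟨n - m + i, by omega⟩ = S ⟨n - m' + i, by omega⟩ := Option.some_injective _ hge
  show S _ = S _
  convert hval using 2
  all_goals (apply Fin.ext; simp only [Fin.val_mk]; omega)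

end STAux

namespace STAux
variable {σ n : ℕ}

noncomputable def Gfun (S : Fin n → Fin σ) : {x // x ∈ Finset.Icc 1 n} → ℕ :=
  fun m => if m.1 = 1 then 1 else growth (sfx S m.1 (Finset.mem_Icc.mp m.2).2)

lemma Gfun_le (S : Fin n → Fin σ) (m : {x // x ∈ Finset.Icc 1 n}) : Gfun S m ≤ m.1 := by
  have hm := Finset.mem_Icc.mp m.2
  unfold Gfun
  split
  · omega
  · exact (growth_le_self (by omega) _)

noncomputable def nodeVal (S : Fin n → Fin σ) :
    (Fin (n+1) ⊕ ((m : {x // x ∈ Finset.Icc 1 n}) × Fin (Gfun S m))) → List (Option (Fin σ))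
  | .inl j => if j.1 < n then target S j.1 else []
  | .inr p => pref S p.1.1 (p.1.1 - Gfun S p.1 + p.2.1 + 1)

lemma nodeVal_mem (S : Fin n → Fin σ) (hn : 1 ≤ n) :
    ∀ x, ∃ j < n, nodeVal S x <+: ((List.ofFn S).drop j).map some ++ [none] := by
  rintro (j | ⟨m, t⟩)
  · by_cases h : j.1 < n
    · exact ⟨j.1, h, by simp only [nodeVal, h, if_true]; exact List.prefix_refl _⟩
    · exact ⟨0, by omega, by simp only [nodeVal, h, if_false]; exact List.nil_prefix⟩
  · have hm := Finset.mem_Icc.mp m.2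
    exact ⟨n - m.1, by omega, pref_prefix_target S m.1 _⟩

lemma nodeVal_key (S : Fin n → Fin σ) (m m' : {x // x ∈ Finset.Icc 1 n})
    (t : Fin (Gfun S m)) (t' : Fin (Gfun S m')) (hlt : m'.1 < m.1) :
    pref S m.1 (m.1 - Gfun S m + t.1 + 1) ≠ pref S m'.1 (m'.1 - Gfun S m' + t'.1 + 1) := by
  intro heq
  have hm := Finset.mem_Icc.mp m.2
  have hm' := Finset.mem_Icc.mp m'.2
  have hGm := Gfun_le S m
  have hGm' := Gfun_le S m'
  have ht := t.isLt
  have ht' := t'.isLt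
  set ℓ := m.1 - Gfun S m + t.1 + 1 with hℓ
  set ℓ' := m'.1 - Gfun S m' + t'.1 + 1 with hℓ'
  have hlℓ : ℓ ≤ m.1 := by omega
  have hlℓ' : ℓ' ≤ m'.1 := by omega
  have hlen : ℓ = ℓ' := by
    have := congrArg List.length heq
    rwa [pref_length S hm.2 hlℓ, pref_length S hm'.2 hlℓ'] at this
  rw [← hlen] at heq
  have hg : growth (sfx S m.1 hm.2) ≤ m.1 - ℓ :=
    growth_le_of_pref_eq S hm.2 hm'.1 hlt (by omega) (by omega) heq
  by_cases h1 : m.1 = 1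
  · omega
  · have : Gfun S m = growth (sfx S m.1 hm.2) := by simp [Gfun, h1]
    omega

lemma nodeVal_inj (S : Fin n → Fin σ) : Function.Injective (nodeVal S) := by
  have hplen : ∀ (m : {x // x ∈ Finset.Icc 1 n}) (t : Fin (Gfun S m)),
      (pref S m.1 (m.1 - Gfun S m + t.1 + 1)).length = m.1 - Gfun S m + t.1 + 1 := by
    intro m t
    have hm := Finset.mem_Icc.mp m.2
    have := Gfun_le S m
    have := t.isLt
    exact pref_length S hm.2 (by omega)
  rintro (j | ⟨m, t⟩) (j' | ⟨m', t'⟩) h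
  · -- inl inl
    simp only [nodeVal] at h
    by_cases hj : j.1 < n <;> by_cases hj' : j'.1 < n <;>
      simp only [hj, hj', if_true, if_false] at h
    · have := congrArg List.length h
      rw [target_length, target_length] at this
      exact congrArg Sum.inl (Fin.ext (by omega))
    · exact absurd (congrArg List.length h) (by rw [target_length]; simp)
    · exact absurd (congrArg List.length h) (by rw [target_length]; simp)
    · have := j.isLt; have := j'.isLt
      exact congrArg Sum.inl (Fin.ext (by omega))
  · -- inl inr
    exfalso
    simp only [nodeVal] at h
    by_cases hj : j.1 < n <;> simp only [hj, if_true, if_false] at h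
    · exact none_not_mem_pref S _ _ (h ▸ none_mem_target S j.1)
    · have := congrArg List.length h
      rw [hplen] at this
      simp at this
  · -- inr inl
    exfalso
    simp only [nodeVal] at h
    by_cases hj : j'.1 < n <;> simp only [hj, if_true, if_false] at h
    · exact none_not_mem_pref S _ _ (h.symm ▸ none_mem_target S j'.1)
    · have := congrArg List.length h
      rw [hplen] at this
      simp at this
  · -- inr inr
    simp only [nodeVal] at h
    rcases Nat.lt_trichotomy m.1 m'.1 with hlt | heqm | hgt
    · exact absurd h.symm (nodeVal_key S m' m t' t hlt)
    · have hmm : m = m' := Subtype.ext heqm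
      subst hmm
      have := congrArg List.length h
      rw [hplen, hplen] at this
      have htt : t = t' := Fin.ext (by omega)
      rw [htt]
    · exact absurd h (nodeVal_key S m m' t t' hgt)

end STAux

namespace STAux
variable {σ n : ℕ}

lemma nodes_finite (S : Fin n → Fin σ) :
    Finite {L : List (Option (Fin σ)) //
      ∃ j < n, L <+: ((List.ofFn S).drop j).map some ++ [none]} := by
  have hfin : {L : List (Option (Fin σ)) |
      ∃ j < n, L <+: ((List.ofFn S).drop j).map some ++ [none]}.Finite := by
    apply Set.Finite.subset (Set.Finite.biUnion (Set.finite_Iio n)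
      (fun j _ => (Set.finite_Iic (target S j).length).image (fun k => (target S j).take k)))
    rintro L ⟨j, hj, hpre⟩
    exact Set.mem_biUnion hj ⟨L.length, hpre.length_le, (List.prefix_iff_eq_take.mp hpre).symm⟩
  exact hfin.to_subtype

lemma part1 (hn : 1 ≤ n) (S : Fin n → Fin σ) :
    2 + n + ∑ m ∈ (Finset.Icc 1 n).attach,
        growth (fun i : Fin m.1 => S ⟨n - m.1 + i.1, by
          have hm := Finset.mem_Icc.mp m.2
          have hi := i.isLt
          omega⟩)
      ≤ suffixTreeNodes S := by
  have hfin := nodes_finite S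
  have hcard : Nat.card (Fin (n+1) ⊕ ((m : {x // x ∈ Finset.Icc 1 n}) × Fin (Gfun S m)))
      ≤ suffixTreeNodes S := by
    unfold suffixTreeNodes
    exact Nat.card_le_card_of_injective
      (fun x => (⟨nodeVal S x, nodeVal_mem S hn x⟩ : {L : List (Option (Fin σ)) //
        ∃ j < n, L <+: ((List.ofFn S).drop j).map some ++ [none]}))
      (fun a b h => nodeVal_inj S (congrArg Subtype.val h))
  have hcard2 : Nat.card (Fin (n+1) ⊕ ((m : {x // x ∈ Finset.Icc 1 n}) × Fin (Gfun S m)))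
      = (n + 1) + ∑ m ∈ (Finset.Icc 1 n).attach, Gfun S m := by
    simp [Nat.card_eq_fintype_card, Fintype.card_sigma, ← Finset.univ_eq_attach]
  have hsum : ∑ m ∈ (Finset.Icc 1 n).attach, Gfun S m
      = 1 + ∑ m ∈ (Finset.Icc 1 n).attach,
        growth (fun i : Fin m.1 => S ⟨n - m.1 + i.1, by
          have hm := Finset.mem_Icc.mp m.2
          have hi := i.isLt
          omega⟩) := by
    have hsplit : ∀ m ∈ (Finset.Icc 1 n).attach, Gfun S m
        = (if m.1 = 1 then 1 else 0) + growth (fun i : Fin m.1 => S ⟨n - m.1 + i.1, by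
          have hm := Finset.mem_Icc.mp m.2
          have hi := i.isLt
          omega⟩) := by
      intro m _
      by_cases h1 : m.1 = 1
      · rw [growth_eq_zero_of_one h1]
        simp [Gfun, h1]
      · simp only [Gfun, h1, if_false, zero_add]
        rfl
    refine (Finset.sum_congr rfl hsplit).trans ?_
    rw [Finset.sum_add_distrib]
    congr 1
    rw [Finset.sum_eq_single_of_mem (⟨1, Finset.mem_Icc.mpr ⟨le_refl 1, hn⟩⟩ :
        {x // x ∈ Finset.Icc 1 n}) (Finset.mem_attach _ _)]
    · simp
    · intro b _ hb
      have : b.1 ≠ 1 := fun h => hb (Subtype.ext h)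
      simp [this]
  omega

end STAux

namespace STAux

lemma helperA : ∀ m : ℕ, m ≤ 2 ^ (m - m / 2) := by
  intro m
  induction m using Nat.strong_induction_on with
  | _ m ih =>
    by_cases h4 : m < 4
    · interval_cases m <;> norm_num
    · have ih2 := ih (m - 2) (by omega)
      have he : m - m / 2 = ((m - 2) - (m - 2) / 2) + 1 := by omega
      rw [he, pow_succ]
      omega

lemma exists_matchShift {σ m k : ℕ} (hm : 2 ≤ m) (T : Fin m → Fin σ)
    (hk : growth T ≤ k) : ∃ j, 1 ≤ j ∧ j ≤ k ∧ MatchShift T j k := by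
  have hne : {k' | ∃ j, MatchShift T j k'}.Nonempty :=
    ⟨m, 1, le_refl 1, by omega, by omega, fun i h h2 => absurd h (by omega)⟩
  have hk' : sInf {k' | ∃ j, MatchShift T j k'} ≤ k := hk
  obtain ⟨j, h1, h2, h3, h4⟩ := Nat.sInf_mem hne
  exact ⟨j, h1, by omega, h1, h2, by omega, fun i h h2' => h4 i (by omega) h2'⟩

lemma card_matchShift_le (σ : ℕ) {m j k : ℕ} (hj : 1 ≤ j) (hjk : j ≤ k) (hkm : k < m)
    [DecidablePred fun T : Fin m → Fin σ => MatchShift T j k] :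
    (Finset.univ.filter fun T : Fin m → Fin σ => MatchShift T j k).card ≤ σ ^ k := by
  classical
  have hcard : (Finset.univ : Finset (Fin k → Fin σ)).card = σ ^ k := by simp
  rw [← hcard]
  apply Finset.card_le_card_of_injOn
    (fun T (i : Fin k) => T ⟨if i.1 < j then i.1 else i.1 + (m - k), by
      have := i.isLt; split <;> omega⟩)
  · intro _ _; exact Finset.mem_univ _
  · intro T hT T' hT' heq
    obtain ⟨-, -, -, h4⟩ := (Finset.mem_filter.mp hT).2
    obtain ⟨-, -, -, h4'⟩ := (Finset.mem_filter.mp hT').2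
    have main : ∀ p, (hp : p < m) → T ⟨p, hp⟩ = T' ⟨p, hp⟩ := by
      intro p
      induction p using Nat.strong_induction_on with
      | _ p ih =>
        intro hp
        by_cases h1 : p < j
        · have hpk : p < k := by omega
          have := congrFun heq ⟨p, hpk⟩
          simp only [if_pos h1] at this
          exact this
        · by_cases h2 : p < j + (m - k)
          · have e1 := h4 (p - j) (by omega) (by omega)
            have e2 := h4' (p - j) (by omega) (by omega)
            have ihh := ih (p - j) (by omega) (by omega)
            have hidx : (⟨j + (p - j), by omega⟩ : Fin m) = ⟨p, hp⟩ := Fin.ext (by simp; omega)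
            rw [hidx] at e1 e2
            rw [← e1, ← e2]
            exact ihh
          · have hik : p - (m - k) < k := by omega
            have hif : ¬(p - (m - k) < j) := by omega
            have this := congrFun heq ⟨p - (m - k), hik⟩
            simp only [if_neg hif] at this
            have hidx : (⟨p - (m - k) + (m - k), by omega⟩ : Fin m) = ⟨p, hp⟩ :=
              Fin.ext (by simp; omega)
            rwa [hidx] at this
    funext x
    have := main x.1 x.isLt
    simpa using this

lemma sum_growth_lower {σ m : ℕ} (hσ : 2 ≤ σ) (hm : 2 ≤ m) :
    m * σ ^ m ≤ 4 * ∑ T : Fin m → Fin σ, growth T := by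
  classical
  set k := m / 2 with hk
  have hk1 : 1 ≤ k := by omega
  have hkm : k < m := by omega
  set B := Finset.univ.filter (fun T : Fin m → Fin σ => growth T ≤ k) with hB
  have hBsub : B ⊆ (Finset.Icc 1 k).biUnion
      (fun j => Finset.univ.filter (fun T : Fin m → Fin σ => MatchShift T j k)) := by
    intro T hT
    obtain ⟨j, hj1, hjk, hmsh⟩ := exists_matchShift hm T (Finset.mem_filter.mp hT).2
    exact Finset.mem_biUnion.mpr ⟨j, Finset.mem_Icc.mpr ⟨hj1, hjk⟩,
      Finset.mem_filter.mpr ⟨Finset.mem_univ _, hmsh⟩⟩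
  have hBcard : B.card ≤ k * σ ^ k := by
    calc B.card ≤ ((Finset.Icc 1 k).biUnion
          (fun j => Finset.univ.filter (fun T : Fin m → Fin σ => MatchShift T j k))).card :=
        Finset.card_le_card hBsub
      _ ≤ ∑ j ∈ Finset.Icc 1 k, (Finset.univ.filter
          (fun T : Fin m → Fin σ => MatchShift T j k)).card := Finset.card_biUnion_le
      _ ≤ ∑ j ∈ Finset.Icc 1 k, σ ^ k := Finset.sum_le_sum (fun j hj =>
          card_matchShift_le σ (Finset.mem_Icc.mp hj).1 (Finset.mem_Icc.mp hj).2 hkm)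
      _ = k * σ ^ k := by simp [Nat.card_Icc, mul_comm]
  have hcardU : Fintype.card (Fin m → Fin σ) = σ ^ m := by simp
  have hsum1 : (k + 1) * (σ ^ m - B.card) ≤ ∑ T : Fin m → Fin σ, growth T := by
    have hcompl : ∀ T ∈ Bᶜ, k + 1 ≤ growth T := by
      intro T hT
      simp only [hB, Finset.mem_compl, Finset.mem_filter, Finset.mem_univ, true_and,
        not_le] at hT
      omega
    calc (k + 1) * (σ ^ m - B.card) = ∑ _T ∈ Bᶜ, (k + 1) := by
          rw [Finset.sum_const, Finset.card_compl, hcardU, smul_eq_mul, mul_comm]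
      _ ≤ ∑ T ∈ Bᶜ, growth T := Finset.sum_le_sum hcompl
      _ ≤ ∑ T : Fin m → Fin σ, growth T :=
          Finset.sum_le_sum_of_subset (Finset.subset_univ _)
  have h2k : 2 * (k * σ ^ k) ≤ σ ^ m := by
    have hpow : m ≤ 2 ^ (m - k) := helperA m
    calc 2 * (k * σ ^ k) ≤ m * σ ^ k := by
          have : 2 * k ≤ m := by omega
          calc 2 * (k * σ ^ k) = (2 * k) * σ ^ k := by ring
            _ ≤ m * σ ^ k := Nat.mul_le_mul_right _ this
      _ ≤ 2 ^ (m - k) * σ ^ k := Nat.mul_le_mul_right _ hpow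
      _ ≤ σ ^ (m - k) * σ ^ k := Nat.mul_le_mul_right _ (Nat.pow_le_pow_left hσ _)
      _ = σ ^ m := by rw [← pow_add]; congr 1; omega
  have hD : σ ^ m ≤ 2 * (σ ^ m - B.card) := by omega
  calc m * σ ^ m ≤ m * (2 * (σ ^ m - B.card)) := Nat.mul_le_mul_left m hD
    _ ≤ (2 * (k + 1)) * (2 * (σ ^ m - B.card)) := Nat.mul_le_mul_right _ (by omega)
    _ = 4 * ((k + 1) * (σ ^ m - B.card)) := by ring
    _ ≤ 4 * ∑ T : Fin m → Fin σ, growth T := Nat.mul_le_mul_left 4 hsum1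

lemma sumIcc (n : ℕ) (hn : 2 ≤ n) : n * n ≤ 4 * ∑ m ∈ Finset.Icc 2 n, m := by
  induction n, hn using Nat.le_induction with
  | base => simp
  | succ n hn ih =>
    rw [Finset.sum_Icc_succ_top (by omega)]
    have h1 : (n + 1) * (n + 1) = n * n + 2 * n + 1 := by ring
    omega
end STAux

namespace STAux

lemma sum_sfx {σ n m : ℕ} (hm : m ≤ n) :
    ∑ S : Fin n → Fin σ, growth (sfx S m hm)
      = σ ^ (n - m) * ∑ T : Fin m → Fin σ, growth T := by
  classical
  let e0 : Fin (n - m) ⊕ Fin m ≃ Fin n := finSumFinEquiv.trans (finCongr (by omega))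
  let e : ((Fin (n - m) → Fin σ) × (Fin m → Fin σ)) ≃ (Fin n → Fin σ) :=
    (Equiv.sumArrowEquivProdArrow _ _ _).symm.trans (Equiv.arrowCongr e0 (Equiv.refl _))
  rw [← Equiv.sum_comp e (fun S => growth (sfx S m hm))]
  have hs : ∀ p : (Fin (n - m) → Fin σ) × (Fin m → Fin σ), sfx (e p) m hm = p.2 := by
    rintro ⟨a, b⟩
    funext i
    show (e (a, b)) ⟨n - m + i.1, _⟩ = b i
    have h1 : e (a, b) = fun x => Sum.elim a b (e0.symm x) := rfl
    have h2 : e0.symm ⟨n - m + i.1, by have := i.isLt; omega⟩ = Sum.inr i := by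
      rw [Equiv.symm_apply_eq]
      apply Fin.ext
      simp [e0, finSumFinEquiv_apply_right]
    rw [h1]
    show Sum.elim a b (e0.symm ⟨n - m + i.1, by have := i.isLt; omega⟩) = b i
    rw [h2]
    rfl
  calc ∑ p : (Fin (n - m) → Fin σ) × (Fin m → Fin σ), growth (sfx (e p) m hm)
      = ∑ p : (Fin (n - m) → Fin σ) × (Fin m → Fin σ), growth p.2 := by
        apply Finset.sum_congr rfl
        intro p _
        rw [hs p]
    _ = σ ^ (n - m) * ∑ T : Fin m → Fin σ, growth T := by
        rw [Fintype.sum_prod_type]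
        simp [Finset.sum_const, Fintype.card_fun]

end STAux



/-- The suffix tree of `S` has at least `2 + n + Σ_{m=1}^{n} γ(S[n−m+1, n])`
nodes; consequently a uniformly random string of length `n` over a `σ`-letter
alphabet (`σ ≥ 2`) has expected suffix-tree size at least `d·n²` eventually. -/
theorem stmt16 (σ : ℕ) (hσ : 2 ≤ σ) :
    (∀ n : ℕ, 1 ≤ n → ∀ S : Fin n → Fin σ,
      2 + n + ∑ m ∈ (Finset.Icc 1 n).attach,
        growth (fun i : Fin m.1 => S ⟨n - m.1 + i.1, by
          have hm := Finset.mem_Icc.mp m.2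
          have hi := i.isLt
          omega⟩)
      ≤ suffixTreeNodes S) ∧
    ∃ d : ℝ, 0 < d ∧ ∃ n₀ : ℕ, ∀ n : ℕ, n₀ < n →
      (∑ S : Fin n → Fin σ, (suffixTreeNodes S : ℝ)) / (σ : ℝ) ^ n
        ≥ d * (n : ℝ) ^ 2 := by
  constructor
  · intro n hn S
    exact STAux.part1 hn S
  · refine ⟨1/16, by norm_num, 2, ?_⟩
    intro n hn
    have hn1 : 1 ≤ n := by omega
    have hn2 : 2 ≤ n := by omega
    have key : n * n * σ ^ n ≤ 16 * ∑ S : Fin n → Fin σ, suffixTreeNodes S := by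
      classical
      have hswap : ∀ S : Fin n → Fin σ,
          (∑ m ∈ (Finset.Icc 1 n).attach,
            growth (STAux.sfx S m.1 (Finset.mem_Icc.mp m.2).2)) ≤ suffixTreeNodes S := by
        intro S
        have hp := STAux.part1 hn1 S
        have he : (∑ m ∈ (Finset.Icc 1 n).attach,
            growth (STAux.sfx S m.1 (Finset.mem_Icc.mp m.2).2))
            = ∑ m ∈ (Finset.Icc 1 n).attach,
              growth (fun i : Fin m.1 => S ⟨n - m.1 + i.1, by
                have hm := Finset.mem_Icc.mp m.2
                have hi := i.isLt
                omega⟩) := Finset.sum_congr rfl (fun m _ => rfl)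
        omega
      have h2 : (∑ S : Fin n → Fin σ, ∑ m ∈ (Finset.Icc 1 n).attach,
            growth (STAux.sfx S m.1 (Finset.mem_Icc.mp m.2).2))
          ≤ ∑ S : Fin n → Fin σ, suffixTreeNodes S :=
        Finset.sum_le_sum (fun S _ => hswap S)
      have h3 : (∑ S : Fin n → Fin σ, ∑ m ∈ (Finset.Icc 1 n).attach,
            growth (STAux.sfx S m.1 (Finset.mem_Icc.mp m.2).2))
          = ∑ m ∈ (Finset.Icc 1 n).attach,
              σ ^ (n - m.1) * ∑ T : Fin m.1 → Fin σ, growth T := by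
        rw [Finset.sum_comm]
        exact Finset.sum_congr rfl (fun m _ => STAux.sum_sfx (Finset.mem_Icc.mp m.2).2)
      have h4 : (∑ m ∈ (Finset.Icc 1 n).attach,
            σ ^ (n - m.1) * ∑ T : Fin m.1 → Fin σ, growth T)
          = ∑ m ∈ Finset.Icc 1 n, σ ^ (n - m) * ∑ T : Fin m → Fin σ, growth T :=
        Finset.sum_attach _ (fun m => σ ^ (n - m) * ∑ T : Fin m → Fin σ, growth T)
      have h5 : (∑ m ∈ Finset.Icc 2 n, σ ^ (n - m) * ∑ T : Fin m → Fin σ, growth T)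
          ≤ ∑ m ∈ Finset.Icc 1 n, σ ^ (n - m) * ∑ T : Fin m → Fin σ, growth T :=
        Finset.sum_le_sum_of_subset (Finset.Icc_subset_Icc_left (by omega))
      have h6 : ∀ m ∈ Finset.Icc 2 n,
          m * σ ^ n ≤ 4 * (σ ^ (n - m) * ∑ T : Fin m → Fin σ, growth T) := by
        intro m hm
        obtain ⟨hm2, hmn⟩ := Finset.mem_Icc.mp hm
        have hd := STAux.sum_growth_lower hσ hm2
        calc m * σ ^ n = σ ^ (n - m) * (m * σ ^ m) := by
              rw [show σ ^ n = σ ^ (n - m) * σ ^ m by rw [← pow_add]; congr 1; omega]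
              ring
          _ ≤ σ ^ (n - m) * (4 * ∑ T : Fin m → Fin σ, growth T) :=
              Nat.mul_le_mul_left _ hd
          _ = 4 * (σ ^ (n - m) * ∑ T : Fin m → Fin σ, growth T) := by ring
      have h7 : (∑ m ∈ Finset.Icc 2 n, m) * σ ^ n
          ≤ 4 * ∑ m ∈ Finset.Icc 2 n, σ ^ (n - m) * ∑ T : Fin m → Fin σ, growth T := by
        rw [Finset.sum_mul, Finset.mul_sum]
        exact Finset.sum_le_sum h6
      have h8 := STAux.sumIcc n hn2
      calc n * n * σ ^ n ≤ (4 * ∑ m ∈ Finset.Icc 2 n, m) * σ ^ n :=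
            Nat.mul_le_mul_right _ h8
        _ = 4 * ((∑ m ∈ Finset.Icc 2 n, m) * σ ^ n) := by ring
        _ ≤ 4 * (4 * ∑ m ∈ Finset.Icc 2 n, σ ^ (n - m) * ∑ T : Fin m → Fin σ, growth T) :=
            Nat.mul_le_mul_left _ h7
        _ = 16 * ∑ m ∈ Finset.Icc 2 n, σ ^ (n - m) * ∑ T : Fin m → Fin σ, growth T := by
            ring
        _ ≤ 16 * ∑ m ∈ Finset.Icc 1 n, σ ^ (n - m) * ∑ T : Fin m → Fin σ, growth T :=
            Nat.mul_le_mul_left _ h5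
        _ = 16 * ∑ S : Fin n → Fin σ, ∑ m ∈ (Finset.Icc 1 n).attach,
              growth (STAux.sfx S m.1 (Finset.mem_Icc.mp m.2).2) := by rw [h3, h4]
        _ ≤ 16 * ∑ S : Fin n → Fin σ, suffixTreeNodes S := Nat.mul_le_mul_left _ h2
    have hσpos : (0:ℝ) < (σ:ℝ) ^ n := by positivity
    rw [ge_iff_le, le_div_iff₀ hσpos]
    have hcast : ((n * n * σ ^ n : ℕ) : ℝ) ≤ ((16 * ∑ S : Fin n → Fin σ, suffixTreeNodes S : ℕ) : ℝ) :=
      Nat.cast_le.mpr key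
    push_cast at hcast
    have hsq : ((n:ℝ))^2 = (n:ℝ) * n := sq (n:ℝ)
    nlinarith [hcast]
end

section
/- For every alphabet size σ ≥ 2 and every aperiodic string T of length j ≥ 1 over that alphabet, there is at most one character a in the alphabet such that the string Ta (T with a appended) of length j+1 is periodic. -/
/-- Evaluation of `snoc` strictly before the last position. -/
lemma snocEvalLt {α : Type*} {j : ℕ} (T : Fin j → α) (a : α) (i : ℕ)
    (h : i < j) (hh : i < j + 1) :
    @Fin.snoc j (fun _ => α) T a ⟨i, hh⟩ = T ⟨i, h⟩ := by
  simp [Fin.snoc, h]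

/-- Evaluation of `snoc` at the last position. -/
lemma snocEvalLast {α : Type*} {j : ℕ} (T : Fin j → α) (a : α) (hh : j < j + 1) :
    @Fin.snoc j (fun _ => α) T a ⟨j, hh⟩ = a := by
  simp [Fin.snoc]

/-- If `0 < g`, `g ∣ c`, `0 < c`, then `(c-1) % g = g - 1`. -/
lemma modPred (g c : ℕ) (hg : 0 < g) (hc : 0 < c) (h : g ∣ c) :
    (c - 1) % g = g - 1 := by
  obtain ⟨k, hk⟩ := h
  rcases Nat.eq_zero_or_pos k with h0 | h0
  · subst h0; simp at hk; omega
  · have hk' : k - 1 + 1 = k := by omega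
    have h2 : g * k = g * (k - 1) + g := by
      calc g * k = g * ((k - 1) + 1) := by rw [hk']
        _ = g * (k - 1) + g := by ring
    have h3 : c - 1 = g * (k - 1) + (g - 1) := by omega
    rw [h3, Nat.mul_add_mod, Nat.mod_eq_of_lt (by omega)]

/-- Repeatedly step down by the period to reach the residue. -/
lemma stepdownAux {α : Type*} (S : ℕ → α) (q n : ℕ) (hq : 0 < q)
    (H : ∀ i, i + q < n → S i = S (i + q)) :
    ∀ i, i < n → S i = S (i % q) := by
  intro i
  induction i using Nat.strong_induction_on with
  | _ i ih =>
    intro hi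
    rcases lt_or_ge i q with h | h
    · rw [Nat.mod_eq_of_lt h]
    · have h1 : (i - q) + q < n := by omega
      have h2 := H (i - q) h1
      have h3 : i - q + q = i := by omega
      rw [h3] at h2
      have h4 := ih (i - q) (by omega) (by omega)
      rw [← h2, h4, Nat.mod_eq_sub_mod h]

/-- Fine–Wilf style lemma: a function with weak periods `p` and `q` on `[0,n)`
with `p + q ≤ n + gcd p q` takes equal values at positions congruent mod the gcd. -/
lemma fineWilf {α : Type*} (S : ℕ → α) :
    ∀ N p q n, p + q ≤ N → 0 < p → 0 < q → p + q ≤ n + Nat.gcd p q →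
    (∀ i, i + p < n → S i = S (i + p)) →
    (∀ i, i + q < n → S i = S (i + q)) →
    ∀ i i', i < n → i' < n → i % Nat.gcd p q = i' % Nat.gcd p q → S i = S i' := by
  intro N
  induction N with
  | zero =>
    intro p q n h hp hq
    have := Nat.le_zero.mp h
    omega
  | succ N ih =>
    intro p q n hN hp hq hn hP hQ i i' hi hi' hres
    rcases lt_trichotomy p q with hlt | heq | hgt
    · -- q > p : reduce to (p, q - p)
      have hg : Nat.gcd p (q - p) = Nat.gcd p q := Nat.gcd_sub_self_right (le_of_lt hlt)
      have hgp : Nat.gcd p q ∣ p := Nat.gcd_dvd_left _ _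
      have hgq : Nat.gcd p q ∣ q := Nat.gcd_dvd_right _ _
      have hg1 : Nat.gcd p q ≤ p := Nat.le_of_dvd hp hgp
      have hg2 : Nat.gcd p q ≤ q - p := Nat.le_of_dvd (by omega) (Nat.dvd_sub hgq hgp)
      have hQ' : ∀ k, k + (q - p) < n - p → S k = S (k + (q - p)) := by
        intro k hk
        have h1 : k + q < n := by omega
        have h2 : (k + q - p) + p = k + q := by omega
        have h3 := hQ k h1
        have h4 := hP (k + q - p) (by omega)
        rw [h2] at h4
        rw [h3, ← h4]
        congr 1
        omega
      have hP' : ∀ k, k + p < n - p → S k = S (k + p) := fun k hk => hP k (by omega)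
      have key := ih p (q - p) (n - p) (by omega) hp (by omega)
        (by rw [hg]; omega) hP' hQ'
      rw [hg] at key
      have e1 := stepdownAux S p n hp hP i hi
      have e2 := stepdownAux S p n hp hP i' hi'
      have hm1 : i % p < p := Nat.mod_lt _ hp
      have hm2 : i' % p < p := Nat.mod_lt _ hp
      rw [e1, e2]
      exact key (i % p) (i' % p) (by omega) (by omega)
        (by rw [Nat.mod_mod_of_dvd _ hgp, Nat.mod_mod_of_dvd _ hgp]; exact hres)
    · -- p = q
      subst heq
      rw [Nat.gcd_self] at hres
      have e1 := stepdownAux S p n hp hP i hi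
      have e2 := stepdownAux S p n hp hP i' hi'
      rw [e1, e2, hres]
    · -- p > q : reduce to (p - q, q)
      have hg : Nat.gcd (p - q) q = Nat.gcd p q := Nat.gcd_sub_self_left (le_of_lt hgt)
      have hgp : Nat.gcd p q ∣ p := Nat.gcd_dvd_left _ _
      have hgq : Nat.gcd p q ∣ q := Nat.gcd_dvd_right _ _
      have hg1 : Nat.gcd p q ≤ q := Nat.le_of_dvd hq hgq
      have hg2 : Nat.gcd p q ≤ p - q := Nat.le_of_dvd (by omega) (Nat.dvd_sub hgp hgq)
      have hP' : ∀ k, k + (p - q) < n - q → S k = S (k + (p - q)) := by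
        intro k hk
        have h1 : k + p < n := by omega
        have h2 : (k + p - q) + q = k + p := by omega
        have h3 := hP k h1
        have h4 := hQ (k + p - q) (by omega)
        rw [h2] at h4
        rw [h3, ← h4]
        congr 1
        omega
      have hQ' : ∀ k, k + q < n - q → S k = S (k + q) := fun k hk => hQ k (by omega)
      have key := ih (p - q) q (n - q) (by omega) (by omega) hq
        (by rw [hg]; omega) hP' hQ'
      rw [hg] at key
      have e1 := stepdownAux S q n hq hQ i hi
      have e2 := stepdownAux S q n hq hQ i' hi'
      have hm1 : i % q < q := Nat.mod_lt _ hq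
      have hm2 : i' % q < q := Nat.mod_lt _ hq
      rw [e1, e2]
      exact key (i % q) (i' % q) (by omega) (by omega)
        (by rw [Nat.mod_mod_of_dvd _ hgq, Nat.mod_mod_of_dvd _ hgq]; exact hres)

/-- If `Ta` has period `d`, then `d` is positive, `2d ≤ j+1`, and `a = T[d-1]`. -/
lemma snocPeriodLast {α : Type*} {j : ℕ} (hj : 1 ≤ j) (T : Fin j → α) (a : α) (d : ℕ)
    (hd : StrPeriod (Fin.snoc T a) d) :
    0 < d ∧ 2 * d ≤ j + 1 ∧ ∀ (hlt : d - 1 < j), a = T ⟨d - 1, hlt⟩ := by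
  obtain ⟨hd1, hd2, hdP⟩ := hd
  have hd0 : 0 < d := by
    rcases Nat.eq_zero_or_pos d with h | h
    · subst h; rw [Nat.zero_dvd] at hd1; omega
    · exact h
  obtain ⟨k, hk⟩ := hd1
  have hk2 : 2 ≤ k := by
    by_contra hcon
    interval_cases k <;> omega
  have hdk : d * k ≥ d * 2 := Nat.mul_le_mul_left d hk2
  refine ⟨hd0, by omega, ?_⟩
  intro hlt
  set S : ℕ → α := fun i => if h : i < j + 1 then @Fin.snoc j (fun _ => α) T a ⟨i, h⟩ else a with hSdef
  have hSeval : ∀ i (h : i < j + 1), S i = @Fin.snoc j (fun _ => α) T a ⟨i, h⟩ := fun i h => dif_pos h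
  have hSper : ∀ i, i + d < j + 1 → S i = S (i + d) := by
    intro i h
    rw [hSeval i (by omega), hSeval (i + d) h]
    exact hdP i h
  have hstep := stepdownAux S d (j + 1) hd0 hSper j (by omega)
  have hmod : j % d = d - 1 := by
    have h1 := modPred d (j + 1) hd0 (by omega) ⟨k, hk⟩
    simpa using h1
  rw [hmod] at hstep
  have hSj : S j = a := by
    rw [hSeval j (by omega)]
    exact snocEvalLast T a (by omega)
  have hSd : S (d - 1) = T ⟨d - 1, by omega⟩ := by
    rw [hSeval (d - 1) (by omega)]
    exact snocEvalLt T a (d - 1) (by omega) (by omega)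
  rw [hSj, hSd] at hstep
  exact hstep

/-- For an aperiodic string `T` of length `j ≥ 1`, at most one character `a`
makes the extended string `Ta` (of length `j+1`) periodic. -/
theorem stmt17 (σ j : ℕ) (hσ : 2 ≤ σ) (hj : 1 ≤ j) (T : Fin j → Fin σ)
    (hT : AperiodicStr T) (a b : Fin σ)
    (ha : ∃ d, StrPeriod (Fin.snoc T a) d)
    (hb : ∃ d, StrPeriod (Fin.snoc T b) d) :
    a = b := by
  obtain ⟨d, hda⟩ := ha
  obtain ⟨e, hdb⟩ := hb
  obtain ⟨hd0, hd2, haeq⟩ := snocPeriodLast hj T a d hda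
  obtain ⟨he0, he2, hbeq⟩ := snocPeriodLast hj T b e hdb
  obtain ⟨_, hdlt, hdP⟩ := hda
  obtain ⟨_, helt, heP⟩ := hdb
  set TS : ℕ → Fin σ := fun i => if h : i < j then T ⟨i, h⟩ else a with hTSdef
  have hTSeval : ∀ i (h : i < j), TS i = T ⟨i, h⟩ := fun i h => dif_pos h
  have hTd : ∀ i, i + d < j → TS i = TS (i + d) := by
    intro i h
    rw [hTSeval i (by omega), hTSeval (i + d) h]
    have h1 := hdP i (by omega)
    rwa [snocEvalLt T a i (by omega) (by omega),
      snocEvalLt T a (i + d) h (by omega)] at h1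
  have hTe : ∀ i, i + e < j → TS i = TS (i + e) := by
    intro i h
    rw [hTSeval i (by omega), hTSeval (i + e) h]
    have h1 := heP i (by omega)
    rwa [snocEvalLt T b i (by omega) (by omega),
      snocEvalLt T b (i + e) h (by omega)] at h1
  have hg0 : 0 < Nat.gcd d e := Nat.gcd_pos_of_pos_left _ hd0
  have hgd : Nat.gcd d e ∣ d := Nat.gcd_dvd_left _ _
  have hge : Nat.gcd d e ∣ e := Nat.gcd_dvd_right _ _
  have key := fineWilf TS (d + e) d e j le_rfl hd0 he0 (by omega) hTd hTe
    (d - 1) (e - 1) (by omega) (by omega)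
    (by rw [modPred _ d hg0 hd0 hgd, modPred _ e hg0 he0 hge])
  rw [hTSeval (d - 1) (by omega), hTSeval (e - 1) (by omega)] at key
  rw [haeq (by omega), hbeq (by omega)]
  exact key
end
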